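/- arXiv:1404.0717 — 8 statements merged into one kernel-verified Lean document; each statement's English description precedes it below -/
import Mathlib

section
/- Let A be a finite abelian group and n ≥ 1. Let d : A →* Equiv.Perm (A × Fin n) be the homomorphism given by diagonal left translation, d a (b, i) = (a * b, i). Then the centralizer in Equiv.Perm (A × Fin n) of the range of d is isomorphic as a group to the wreath product A ≀ Σ_n. -/
/-!
A permutation `π` of `A × Fin n` commuting with every left translation `(b, i) ↦ (a * b, i)` is
determined by the images `π (1, i) = (g i, σ i)`, since then `π (a, i) = (a * g i, σ i)`; the map
`σ` is injective because `π` is, so it is a permutation. Conversely every such pair `(g, σ)` gives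
a permutation commuting with left translations, and composing these permutations multiplies the
pairs as in the wreath product.
-/

/-- The action of `Equiv.Perm (Fin n)` on `Fin n → A` by `(σ • f) i = f (σ⁻¹ i)`. -/
def permMulAut (A : Type*) [Group A] (n : ℕ) : Equiv.Perm (Fin n) →* MulAut (Fin n → A) where
  toFun σ := MulEquiv.arrowCongr σ (MulEquiv.refl A)
  map_one' := by ext f i; rfl
  map_mul' σ τ := by ext f i; rfl

/-- The wreath product `A ≀ Σ_n = (Fin n → A) ⋊ Equiv.Perm (Fin n)`. -/
abbrev WreathProduct (A : Type*) [Group A] (n : ℕ) : Type _ :=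
  SemidirectProduct (Fin n → A) (Equiv.Perm (Fin n)) (permMulAut A n)

open Equiv Subgroup

section
variable {A ι : Type*} [Group A]

lemma mem_centralizer_range_iff {d : A →* Perm (A × ι)}
    (hd : ∀ (a b : A) (i : ι), d a (b, i) = (a * b, i)) {π : Perm (A × ι)} :
    π ∈ centralizer (Set.range d) ↔
      ∀ (a : A) (i : ι), π (a, i) = (a * (π (1, i)).1, (π (1, i)).2) := by
  rw [mem_centralizer_iff]
  constructor
  · intro h a i
    simpa [hd] using congr($(h (d a) ⟨a, rfl⟩) (1, i)).symm
  · rintro h _ ⟨a, rfl⟩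
    ext ⟨b, i⟩ <;> simp only [Perm.mul_apply, hd, h b i, h (a * b) i, mul_assoc]

lemma exists_perm_eq_snd_apply_one [Finite ι] {π : Perm (A × ι)}
    (hπ : ∀ (a : A) (i : ι), π (a, i) = (a * (π (1, i)).1, (π (1, i)).2)) :
    ∃ σ : Perm ι, ∀ i, (π (1, i)).2 = σ i := by
  set g : ι → A := fun i => (π (1, i)).1
  set t : ι → ι := fun i => (π (1, i)).2
  have ht : t.Injective := fun i j hij => by
    have : π (g j * (g i)⁻¹, i) = π (1, j) := by
      rw [hπ]
      exact Prod.ext (by simp [g]) hij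
    exact congrArg Prod.snd (π.injective this)
  exact ⟨Equiv.ofBijective t (Finite.injective_iff_bijective.mp ht), fun _ => rfl⟩

end

namespace WreathProduct

variable {A : Type*} [Group A] {n : ℕ}

-- The inverse makes this a homomorphism rather than an antihomomorphism
-- when `A` is not commutative.
def toPerm : WreathProduct A n →* Perm (A × Fin n) where
  toFun w :=
    { toFun := fun p => (p.1 * (w.left (w.right p.2))⁻¹, w.right p.2)
      invFun := fun p => (p.1 * w.left p.2, w.right⁻¹ p.2)
      left_inv := fun p => by simp
      right_inv := fun p => by simp }
  map_one' := by ext <;> simp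
  map_mul' w₁ w₂ := by ext <;> simp [permMulAut, mul_assoc]

@[simp]
lemma toPerm_apply (w : WreathProduct A n) (p : A × Fin n) :
    toPerm w p = (p.1 * (w.left (w.right p.2))⁻¹, w.right p.2) :=
  rfl

lemma toPerm_injective : Function.Injective (toPerm : WreathProduct A n →* Perm (A × Fin n)) := by
  refine (injective_iff_map_eq_one _).mpr fun w hw => ?_
  have hright : w.right = 1 := Equiv.ext fun i => congr(($hw (1, i)).2)
  refine SemidirectProduct.ext (funext fun i => ?_) hright
  simpa [hright] using congr(($hw (1, i)).1)

lemma range_toPerm {d : A →* Perm (A × Fin n)}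
    (hd : ∀ (a b : A) (i : Fin n), d a (b, i) = (a * b, i)) :
    (toPerm : WreathProduct A n →* Perm (A × Fin n)).range = centralizer (Set.range d) := by
  ext π
  rw [mem_centralizer_range_iff hd]
  constructor
  · rintro ⟨w, rfl⟩ a i
    simp
  · intro hπ
    obtain ⟨σ, hσ⟩ := exists_perm_eq_snd_apply_one hπ
    refine ⟨⟨fun j => ((π (1, σ.symm j)).1)⁻¹, σ⟩, ?_⟩
    ext ⟨a, i⟩ <;> simp [hπ a i, hσ]

end WreathProduct

theorem centralizer_diagonal_translation_iso_wreath_general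
    {A : Type*} [CommGroup A] (n : ℕ)
    (d : A →* Equiv.Perm (A × Fin n))
    (hd : ∀ (a b : A) (i : Fin n), d a (b, i) = (a * b, i)) :
    Nonempty ((Subgroup.centralizer (Set.range ⇑d)) ≃* WreathProduct A n) :=
  ⟨(MulEquiv.subgroupCongr (WreathProduct.range_toPerm hd)).symm.trans
    (MonoidHom.ofInjective WreathProduct.toPerm_injective).symm⟩

/-- Let `A` be a finite abelian group and `n ≥ 1`.  If
`d : A →* Equiv.Perm (A × Fin n)` is the homomorphism given by diagonal left
translation, `d a (b, i) = (a * b, i)`, then the centralizer in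
`Equiv.Perm (A × Fin n)` of the range of `d` is isomorphic as a group to the
wreath product `A ≀ Σ_n`. -/
theorem centralizer_diagonal_translation_iso_wreath
    {A : Type*} [CommGroup A] [Fintype A] (n : ℕ) (hn : 1 ≤ n)
    (d : A →* Equiv.Perm (A × Fin n))
    (hd : ∀ (a b : A) (i : Fin n), d a (b, i) = (a * b, i)) :
    Nonempty ((Subgroup.centralizer (Set.range ⇑d)) ≃* WreathProduct A n) :=
  centralizer_diagonal_translation_iso_wreath_general n d hd
end

section
/- Let G be an abelian group acting transitively on a finite nonempty set X through a homomorphism ρ : G →* Equiv.Perm X. Then for every point x₀ ∈ X, the centralizer of ρ is isomorphic as a group to the quotient group G ⧸ (stabilizer of x₀). -/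
/-!
A permutation commuting with a transitive action is determined by the image of a single
point. For abelian `G` the permutations `ρ g` themselves commute with the action and already
send `x₀` anywhere, so the centralizer is exactly the range of `ρ`, and `ρ g` fixes `x₀` only
when `ρ g = 1`. Hence the centralizer is `G ⧸ ker ρ = G ⧸ stabOf ρ x₀`.
-/

/-- The stabilizer of `x : X` under the action of `G` on `X` through
`ρ : G →* Equiv.Perm X`: the subgroup `{g : G | ρ g x = x}`. -/
def stabOf {G X : Type*} [Group G] (ρ : G →* Equiv.Perm X) (x : X) : Subgroup G :=
  Subgroup.comap ρ (MulAction.stabilizer (Equiv.Perm X) x)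

section Group

variable {G X : Type*} [Group G] (ρ : G →* Equiv.Perm X) (htrans : ∀ x y : X, ∃ g : G, ρ g x = y)
include htrans

theorem eq_of_mem_centralizer_range_of_apply_eq {c d : Equiv.Perm X}
    (hc : c ∈ Subgroup.centralizer (Set.range ρ)) (hd : d ∈ Subgroup.centralizer (Set.range ρ))
    {x : X} (hx : c x = d x) : c = d := by
  ext y
  obtain ⟨g, rfl⟩ := htrans x y
  have hcg : c * ρ g = ρ g * c := (hc (ρ g) ⟨g, rfl⟩).symm
  have hdg : d * ρ g = ρ g * d := (hd (ρ g) ⟨g, rfl⟩).symm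
  calc c (ρ g x) = (c * ρ g) x := rfl
    _ = ρ g (d x) := by rw [hcg, Equiv.Perm.mul_apply, hx]
    _ = d (ρ g x) := by rw [← Equiv.Perm.mul_apply, ← hdg, Equiv.Perm.mul_apply]

end Group

section CommGroup

variable {G X : Type*} [CommGroup G] (ρ : G →* Equiv.Perm X)
  (htrans : ∀ x y : X, ∃ g : G, ρ g x = y)

theorem range_le_centralizer_range : ρ.range ≤ Subgroup.centralizer (Set.range ρ) := by
  rw [← MonoidHom.coe_range]
  exact Subgroup.le_centralizer ρ.range

include htrans

theorem stabOf_eq_ker (x : X) : stabOf ρ x = ρ.ker := by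
  ext g
  have hg : ρ g ∈ Subgroup.centralizer (Set.range ρ) :=
    range_le_centralizer_range ρ ⟨g, rfl⟩
  refine ⟨fun hfix => eq_of_mem_centralizer_range_of_apply_eq ρ htrans hg (one_mem _) hfix,
    fun hker => ?_⟩
  change ρ g x = x
  rw [MonoidHom.mem_ker.mp hker, Equiv.Perm.one_apply]

theorem centralizer_range_eq_range : Subgroup.centralizer (Set.range ρ) = ρ.range := by
  refine le_antisymm (fun c hc => ?_) (range_le_centralizer_range ρ)
  rcases isEmpty_or_nonempty X with _ | ⟨⟨x⟩⟩
  · exact ⟨1, Subsingleton.elim _ _⟩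
  obtain ⟨g, hg⟩ := htrans x (c x)
  exact ⟨g, eq_of_mem_centralizer_range_of_apply_eq ρ htrans
    (range_le_centralizer_range ρ ⟨g, rfl⟩) hc hg⟩

end CommGroup

theorem centralizer_iso_quotient_stabilizer_general
    {G X : Type*} [CommGroup G]
    (ρ : G →* Equiv.Perm X) (htrans : ∀ x y : X, ∃ g : G, ρ g x = y) (x₀ : X) :
    Nonempty ((Subgroup.centralizer (Set.range ⇑ρ)) ≃* G ⧸ stabOf ρ x₀) :=
  ⟨(MulEquiv.subgroupCongr (centralizer_range_eq_range ρ htrans)).trans <|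
    (QuotientGroup.quotientKerEquivRange ρ).symm.trans <|
      QuotientGroup.quotientMulEquivOfEq (stabOf_eq_ker ρ htrans x₀).symm⟩

/-- Let `G` be an abelian group acting transitively on a finite nonempty
set `X` through a homomorphism `ρ : G →* Equiv.Perm X`.  Then for every point `x₀ ∈ X`,
the centralizer of `ρ` is isomorphic as a group to the quotient group
`G ⧸ (stabilizer of x₀)`. -/
theorem centralizer_iso_quotient_stabilizer
    {G X : Type*} [CommGroup G] [Fintype X] [Nonempty X]
    (ρ : G →* Equiv.Perm X) (htrans : ∀ x y : X, ∃ g : G, ρ g x = y) (x₀ : X) :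
    Nonempty ((Subgroup.centralizer (Set.range ⇑ρ)) ≃* G ⧸ stabOf ρ x₀) :=
  centralizer_iso_quotient_stabilizer_general ρ htrans x₀
end

section
/- Let G be an abelian group acting on a finite set X through a homomorphism ρ : G →* Equiv.Perm X. Since G is abelian, all points of a given G-orbit have the same stabilizer subgroup, and each stabilizer has finite index in G. Let T be the (finite) set of subgroups of G that occur as stabilizers of points of X, and for H ∈ T let N_H be the number of G-orbits whose points have stabilizer exactly H. Then the centralizer of ρ in Equiv.Perm X is isomorphic as a group to the product over H ∈ T of the wreath products (G ⧸ H) ≀ Σ_{N_H}. -/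
/-- The orbit equivalence relation on `X` for the action of `G` via `ρ`. -/
def orbitSetoid {G X : Type*} [Group G] (ρ : G →* Equiv.Perm X) : Setoid X where
  r x y := ∃ g : G, ρ g x = y
  iseqv := by
    constructor
    · intro x; exact ⟨1, by simp⟩
    · rintro x y ⟨g, rfl⟩; exact ⟨g⁻¹, by simp⟩
    · rintro x y z ⟨g, rfl⟩ ⟨h, rfl⟩; exact ⟨h * g, by simp⟩

/-- The number of `G`-orbits in `X` all of whose points have stabilizer exactly `H`. -/
noncomputable def orbitCountWithStab {G X : Type*} [Group G]
    (ρ : G →* Equiv.Perm X) (H : Subgroup G) : ℕ :=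
  Nat.card (Quotient (Setoid.comap (Subtype.val : {x : X // stabOf ρ x = H} → X)
    (orbitSetoid ρ)))

/-!
An abelian `G`-set is, equivariantly, the disjoint union over the occurring stabilizers `H` of
`N_H` copies of `G ⧸ H`, so it suffices to compute the centralizer for this model. A permutation
commuting with `G` preserves stabilizers, hence each block `Fin N_H × G ⧸ H`. On a block it is
determined by the images of the points `(i, 1)`: a permutation `σ` of the orbits together with a
translation `f (σ i)` of each one, i.e. an element `(f, σ)` of the wreath product acting by
`(i, a) ↦ (σ i, f (σ i) * a)`.
-/

open Equiv Subgroup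

theorem Subgroup.map_centralizer_mulEquiv {M N : Type*} [Group M] [Group N] (φ : M ≃* N)
    (S : Set M) : (centralizer S).map (φ : M →* N) = centralizer (φ '' S) := by
  ext n
  rw [← φ.toMonoidHom_eq_coe, mem_map_equiv, mem_centralizer_iff, mem_centralizer_iff,
    Set.forall_mem_image]
  refine forall₂_congr fun m _ => ?_
  rw [← φ.symm.injective.eq_iff, map_mul, map_mul, φ.symm_apply_apply]

def centralizerRangeCongr {G Y X : Type*} [Group G] {ρ₀ : G →* Perm Y} {ρ : G →* Perm X}
    (e : Y ≃ X) (he : ∀ g, e.permCongr (ρ₀ g) = ρ g) :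
    centralizer (Set.range ρ₀) ≃* centralizer (Set.range ρ) :=
  (MulEquiv.subgroupMap e.permCongrHom _).trans <| MulEquiv.subgroupCongr <| by
    rw [map_centralizer_mulEquiv, ← Set.range_comp]
    exact congrArg (fun f => centralizer (Set.range f)) (funext he)

theorem Equiv.Perm.mem_range_sigmaCongrRightHom_of_fst_eq {α : Type*} {β : α → Type*}
    {c : Perm (Σ a, β a)} (hc : ∀ x, (c x).1 = x.1) : c ∈ (sigmaCongrRightHom β).range := by
  refine ⟨fun a => (sigmaSubtype a).permCongr (c.subtypePerm fun x => by rw [hc x]), ?_⟩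
  ext1 ⟨a, b⟩
  exact congrArg Subtype.val ((sigmaSubtype a).symm_apply_apply ⟨c ⟨a, b⟩, hc _⟩)

section Stabilizer

variable {G X : Type*} [Group G] (ρ : G →* Perm X)

theorem mem_stabOf {x : X} {g : G} : g ∈ stabOf ρ x ↔ ρ g x = x := Iff.rfl

theorem stabOf_le_stabOf_apply {c : Perm X} (hc : c ∈ centralizer (Set.range ρ)) (x : X) :
    stabOf ρ x ≤ stabOf ρ (c x) := fun g hg => by
  rw [mem_stabOf, ← Perm.mul_apply, hc _ ⟨g, rfl⟩, Perm.mul_apply]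
  exact congrArg c hg

theorem stabOf_apply_of_mem_centralizer {c : Perm X} (hc : c ∈ centralizer (Set.range ρ))
    (x : X) : stabOf ρ (c x) = stabOf ρ x := by
  refine le_antisymm ?_ (stabOf_le_stabOf_apply ρ hc x)
  simpa using stabOf_le_stabOf_apply ρ (inv_mem hc) (c x)

end Stabilizer

section CommStabilizer

variable {G X : Type*} [CommGroup G] (ρ : G →* Perm X)

theorem apply_mem_centralizer_range (g : G) :
    ρ g ∈ centralizer (Set.range ρ) := by
  rintro _ ⟨h, rfl⟩
  rw [← map_mul, ← map_mul, mul_comm]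

theorem stabOf_apply (g : G) (x : X) : stabOf ρ (ρ g x) = stabOf ρ x :=
  stabOf_apply_of_mem_centralizer ρ (apply_mem_centralizer_range ρ g) x

end CommStabilizer

section Wreath

variable (A : Type*) [Group A] (n : ℕ)

theorem permMulAut_apply (σ : Perm (Fin n)) (f : Fin n → A) (i : Fin n) :
    permMulAut A n σ f i = f (σ⁻¹ i) := rfl

def wreathAction : WreathProduct A n →* Perm (Fin n × A) where
  toFun w :=
    { toFun p := (w.right p.1, w.left (w.right p.1) * p.2)
      invFun p := (w.right⁻¹ p.1, (w.left p.1)⁻¹ * p.2)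
      left_inv p := by simp
      right_inv p := by simp }
  map_one' := by ext p <;> simp
  map_mul' v w := by ext p <;> simp [mul_assoc, permMulAut_apply]

@[simp]
theorem wreathAction_apply (w : WreathProduct A n) (p : Fin n × A) :
    wreathAction A n w p = (w.right p.1, w.left (w.right p.1) * p.2) := rfl

theorem wreathAction_injective : Function.Injective (wreathAction A n) := by
  refine (injective_iff_map_eq_one _).2 fun w hw => ?_
  have h i := congr($hw (i, 1))
  simp only [wreathAction_apply, mul_one, Perm.one_apply, Prod.mk.injEq] at h
  ext i
  · simpa [(h i).1] using (h i).2
  · simp [(h i).1]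

def translationAction : A →* Perm (Fin n × A) where
  toFun a := prodCongr (Equiv.refl _) (Equiv.mulLeft a)
  map_one' := by ext p <;> simp
  map_mul' a b := by ext p <;> simp [mul_assoc]

@[simp]
theorem translationAction_apply (a : A) (p : Fin n × A) :
    translationAction A n a p = (p.1, a * p.2) := rfl

end Wreath

theorem range_wreathAction (A : Type*) [CommGroup A] (n : ℕ) :
    (wreathAction A n).range = centralizer (Set.range (translationAction A n)) := by
  refine le_antisymm ?_ fun c hc => ?_
  · rintro _ ⟨w, rfl⟩ _ ⟨a, rfl⟩
    ext p <;> simp [mul_left_comm]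
  have key (i : Fin n) (a : A) : c (i, a) = ((c (i, 1)).1, a * (c (i, 1)).2) := by
    simpa using congr($(hc _ ⟨a, rfl⟩) (i, 1)).symm
  have hσ : Function.Bijective fun i => (c (i, 1)).1 := by
    refine Finite.surjective_iff_bijective.mp fun j => ?_
    obtain ⟨⟨i, a⟩, h⟩ := c.surjective (j, 1)
    exact ⟨i, by rw [key] at h; exact congrArg Prod.fst h⟩
  let σ := Equiv.ofBijective _ hσ
  refine ⟨⟨fun j => (c (σ.symm j, 1)).2, σ⟩, ?_⟩
  ext ⟨i, a⟩ <;> simp [σ, key i a, mul_comm]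

section Model

variable {G : Type*} [CommGroup G] {ι : Type*} (K : ι → Subgroup G) (n : ι → ℕ)

abbrev OrbitModel : Type _ := Σ i, Fin (n i) × G ⧸ K i

def modelAction : G →* Perm (OrbitModel K n) :=
  (Perm.sigmaCongrRightHom _).comp
    (MonoidHom.pi fun i => (translationAction (G ⧸ K i) (n i)).comp (QuotientGroup.mk' (K i)))

theorem stabOf_modelAction (y : OrbitModel K n) : stabOf (modelAction K n) y = K y.1 := by
  ext g
  obtain ⟨i, j, a⟩ := y
  simp [mem_stabOf, modelAction]

def modelWreathHom : (Π i, WreathProduct (G ⧸ K i) (n i)) →* Perm (OrbitModel K n) :=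
  (Perm.sigmaCongrRightHom _).comp (MonoidHom.piMap fun i => wreathAction (G ⧸ K i) (n i))

theorem modelWreathHom_injective : Function.Injective (modelWreathHom K n) :=
  Perm.sigmaCongrRightHom_injective.comp fun _ _ h =>
    funext fun i => wreathAction_injective _ _ (congr_fun h i)

theorem range_modelWreathHom (hK : Function.Injective K) :
    (modelWreathHom K n).range = centralizer (Set.range (modelAction K n)) := by
  refine le_antisymm ?_ fun c hc => ?_
  · rintro _ ⟨w, rfl⟩ _ ⟨g, rfl⟩
    simp only [modelWreathHom, modelAction, MonoidHom.comp_apply, ← map_mul]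
    congr 1
    funext i
    exact (range_wreathAction _ _).le ⟨w i, rfl⟩ _ ⟨(g : G ⧸ K i), rfl⟩
  have hfst (y : OrbitModel K n) : (c y).1 = y.1 :=
    hK (by simpa only [stabOf_modelAction] using stabOf_apply_of_mem_centralizer _ hc y)
  obtain ⟨d, rfl⟩ := Perm.mem_range_sigmaCongrRightHom_of_fst_eq hfst
  have hd (i : ι) : d i ∈ (wreathAction (G ⧸ K i) (n i)).range := by
    rw [range_wreathAction]
    rintro _ ⟨a, rfl⟩
    obtain ⟨g, rfl⟩ := QuotientGroup.mk_surjective a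
    have hcg := hc _ ⟨g, rfl⟩
    simp only [modelAction, MonoidHom.comp_apply, ← map_mul] at hcg
    exact congr_fun (Perm.sigmaCongrRightHom_injective hcg) i
  choose w hw using hd
  exact ⟨w, congrArg (Perm.sigmaCongrRightHom _) (funext hw)⟩

noncomputable def centralizerModelEquiv (hK : Function.Injective K) :
    (Π i, WreathProduct (G ⧸ K i) (n i)) ≃* centralizer (Set.range (modelAction K n)) :=
  (MonoidHom.ofInjective (modelWreathHom_injective K n)).trans
    (MulEquiv.subgroupCongr (range_modelWreathHom K n hK))

end Model

section OrbitDecomposition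

variable {G X : Type*} [Group G] (ρ : G →* Perm X)

def quotientOrbitMap (x : X) {H : Subgroup G} (hH : H ≤ stabOf ρ x) : G ⧸ H → X :=
  fun a => Quotient.liftOn' a (fun g => ρ g x) fun g₁ g₂ hg => by
    have h : ρ (g₁⁻¹ * g₂) x = x := hH (QuotientGroup.leftRel_apply.mp hg)
    simpa [map_mul] using (congrArg (ρ g₁) h).symm

@[simp]
theorem quotientOrbitMap_mk (x : X) {H : Subgroup G} (hH : H ≤ stabOf ρ x) (g : G) :
    quotientOrbitMap ρ x hH g = ρ g x := rfl

theorem quotientOrbitMap_smul (x : X) {H : Subgroup G} (hH : H ≤ stabOf ρ x) (g : G)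
    (a : G ⧸ H) : quotientOrbitMap ρ x hH (g • a) = ρ g (quotientOrbitMap ρ x hH a) := by
  induction a using QuotientGroup.induction_on with
  | H b => simp [map_mul]

theorem quotientOrbitMap_injective {x : X} {H : Subgroup G} (hx : stabOf ρ x = H) :
    Function.Injective (quotientOrbitMap ρ x hx.ge) := by
  intro a b hab
  induction a using QuotientGroup.induction_on with | H g₁ =>
  induction b using QuotientGroup.induction_on with | H g₂ =>
  rw [QuotientGroup.eq, ← hx, mem_stabOf, map_mul, Perm.mul_apply, map_inv]
  exact (Perm.inv_eq_iff_eq).mpr hab.symm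

variable [Finite X]

noncomputable def orbitRep (H : Subgroup G) (j : Fin (orbitCountWithStab ρ H)) : X :=
  ((Finite.equivFin _).symm j).out.1

theorem stabOf_orbitRep (H : Subgroup G) (j : Fin (orbitCountWithStab ρ H)) :
    stabOf ρ (orbitRep ρ H j) = H :=
  ((Finite.equivFin _).symm j).out.2

theorem exists_apply_orbitRep_eq {x : X} {H : Subgroup G} (hx : stabOf ρ x = H) :
    ∃ j g, ρ g (orbitRep ρ H j) = x := by
  obtain ⟨g, hg⟩ := Quotient.mk_out (s := Setoid.comap Subtype.val (orbitSetoid ρ))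
    (⟨x, hx⟩ : {x // stabOf ρ x = H})
  exact ⟨Finite.equivFin _ ⟦⟨x, hx⟩⟧, g, by simpa [orbitRep] using hg⟩

theorem eq_of_apply_orbitRep_eq {H : Subgroup G} {j j' : Fin (orbitCountWithStab ρ H)}
    {g g' : G} (h : ρ g (orbitRep ρ H j) = ρ g' (orbitRep ρ H j')) : j = j' := by
  refine (Finite.equivFin _).symm.injective (Quotient.out_equiv_out.mp ⟨g'⁻¹ * g, ?_⟩)
  simp_all [orbitRep, map_mul]

end OrbitDecomposition

section ModelEquiv

variable {G X : Type*} [CommGroup G] [Finite X] (ρ : G →* Perm X)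

abbrev StabilizerModel : Type _ :=
  OrbitModel (fun H : Set.range (fun x : X => stabOf ρ x) => (H : Subgroup G))
    (fun H => orbitCountWithStab ρ H)

noncomputable def ofStabilizerModel : StabilizerModel ρ → X
  | ⟨H, j, a⟩ => quotientOrbitMap ρ (orbitRep ρ H j) (stabOf_orbitRep ρ H j).ge a

theorem stabOf_ofStabilizerModel (y : StabilizerModel ρ) :
    stabOf ρ (ofStabilizerModel ρ y) = y.1 := by
  obtain ⟨H, j, a⟩ := y
  obtain ⟨g, rfl⟩ := QuotientGroup.mk_surjective a
  exact (stabOf_apply ρ g _).trans (stabOf_orbitRep ρ H j)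

theorem ofStabilizerModel_modelAction (g : G) (y : StabilizerModel ρ) :
    ofStabilizerModel ρ (modelAction _ _ g y) = ρ g (ofStabilizerModel ρ y) := by
  obtain ⟨H, j, a⟩ := y
  exact quotientOrbitMap_smul ρ (orbitRep ρ H j) (stabOf_orbitRep ρ H j).ge g a

theorem ofStabilizerModel_bijective : Function.Bijective (ofStabilizerModel ρ) := by
  refine ⟨?_, fun x => ?_⟩
  · rintro ⟨H, j, a⟩ ⟨H', j', a'⟩ h
    obtain rfl : H = H' :=
      Subtype.ext (by simpa only [stabOf_ofStabilizerModel] using congrArg (stabOf ρ) h)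
    obtain ⟨g, rfl⟩ := QuotientGroup.mk_surjective a
    obtain ⟨g', rfl⟩ := QuotientGroup.mk_surjective a'
    obtain rfl := eq_of_apply_orbitRep_eq ρ h
    rw [quotientOrbitMap_injective ρ (stabOf_orbitRep ρ H j) h]
  · obtain ⟨j, g, hg⟩ := exists_apply_orbitRep_eq ρ (H := stabOf ρ x) rfl
    exact ⟨⟨⟨_, x, rfl⟩, j, g⟩, hg⟩

noncomputable def stabilizerModelEquiv : StabilizerModel ρ ≃ X :=
  Equiv.ofBijective _ (ofStabilizerModel_bijective ρ)

theorem permCongr_stabilizerModelEquiv (g : G) :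
    (stabilizerModelEquiv ρ).permCongr (modelAction _ _ g) = ρ g := by
  ext x
  obtain ⟨y, rfl⟩ := (stabilizerModelEquiv ρ).surjective x
  simp [stabilizerModelEquiv, ofStabilizerModel_modelAction]

end ModelEquiv

/-- Let `G` be an abelian group acting on a finite set `X` through
`ρ : G →* Equiv.Perm X`.  All points of a given `G`-orbit have the same stabilizer, each
stabilizer has finite index, and the centralizer of `ρ` in `Equiv.Perm X` is isomorphic
as a group to the product over the set `T` of occurring stabilizers `H` of the wreath
products `(G ⧸ H) ≀ Σ_{N_H}`, where `N_H` is the number of orbits with stabilizer `H`. -/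
theorem centralizer_iso_prod_wreath
    {G X : Type*} [CommGroup G] [Fintype X] (ρ : G →* Equiv.Perm X) :
    (∀ x y : X, (∃ g : G, ρ g x = y) → stabOf ρ x = stabOf ρ y) ∧
      (∀ x : X, (stabOf ρ x).index ≠ 0) ∧
      Nonempty ((Subgroup.centralizer (Set.range ⇑ρ)) ≃*
        ∀ H : Set.range (fun x : X => stabOf ρ x),
          WreathProduct (G ⧸ (H : Subgroup G)) (orbitCountWithStab ρ (H : Subgroup G))) := by
  refine ⟨fun x _ ⟨g, hg⟩ => hg ▸ (stabOf_apply ρ g x).symm, fun x => ?_, ?_⟩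
  · have : Finite (G ⧸ stabOf ρ x) := Finite.of_injective _ (quotientOrbitMap_injective ρ rfl)
    exact index_ne_zero_of_finite
  · exact ⟨(centralizerRangeCongr (stabilizerModelEquiv ρ) (permCongr_stabilizerModelEquiv ρ)).symm.trans
      (centralizerModelEquiv _ _ Subtype.val_injective).symm⟩
end

section
/- Let G be a group acting on a finite set X through a homomorphism ρ : G →* Equiv.Perm X, and suppose X is the disjoint union of two subsets X₁ and X₂, each stable under ρ g for every g ∈ G, so that ρ restricts to actions ρ₁ : G →* Equiv.Perm X₁ and ρ₂ : G →* Equiv.Perm X₂. Then the subgroup of Equiv.Perm X consisting of permutations that lie in the centralizer of ρ and map X₁ into X₁ is isomorphic as a group to the product of the centralizer of ρ₁ in Equiv.Perm X₁ and the centralizer of ρ₂ in Equiv.Perm X₂. -/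
/-!
Gluing a permutation of `X₁` with one of its complement `X₂` is an injective homomorphism
`Perm X₁ × Perm X₂ →* Perm X` whose range consists of the permutations mapping `X₁` into
itself (this uses finiteness), and it carries `ρ₁ × ρ₂` to `ρ`. An injective homomorphism maps
the centralizer of a set onto the centralizer of its image, intersected with the range; and the
centralizer of `ρ₁ × ρ₂` is the product of the centralizers of `ρ₁` and `ρ₂`.
-/

/-- The subgroup of `Equiv.Perm X` (for `X` finite) of permutations lying in the
centralizer of `ρ : G →* Equiv.Perm X` and mapping the subset `X₁` into itself. -/
def centralizerMapsTo {G X : Type*} [Group G] [Finite X]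
    (ρ : G →* Equiv.Perm X) (X₁ : Set X) : Subgroup (Equiv.Perm X) where
  carrier := {σ | σ ∈ Subgroup.centralizer (Set.range ⇑ρ) ∧ Set.MapsTo ⇑σ X₁ X₁}
  one_mem' := ⟨one_mem _, fun x hx => by simpa using hx⟩
  mul_mem' := fun {σ τ} hσ hτ =>
    ⟨mul_mem hσ.1 hτ.1, fun x hx => hσ.2 (hτ.2 hx)⟩
  inv_mem' := by
    rintro σ ⟨hc, hm⟩
    refine ⟨inv_mem hc, ?_⟩
    have hfin : X₁.Finite := Set.toFinite X₁
    have hbij : Set.BijOn ⇑σ X₁ X₁ :=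
      ((Set.Finite.injOn_iff_bijOn_of_mapsTo hfin hm).mp (σ.injective.injOn))
    intro x hx
    obtain ⟨y, hy, hyx⟩ := hbij.surjOn hx
    have : σ⁻¹ x = y := by
      rw [← hyx]; exact Equiv.symm_apply_apply σ y
    rw [this]; exact hy

open Equiv Perm Subgroup

theorem Equiv.Perm.apply_mem_iff_of_mapsTo {α : Type*} {s : Set α} [Finite s] {σ : Perm α}
    (h : Set.MapsTo σ s s) (x : α) : σ x ∈ s ↔ x ∈ s :=
  ⟨fun hx => by simpa using perm_symm_mapsTo_of_mapsTo σ h hx, fun hx => h hx⟩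

theorem Equiv.Perm.mem_range_subtypeCongrHom_iff {α : Type*} {s : Set α} [DecidablePred (· ∈ s)]
    [Finite s] {σ : Perm α} : σ ∈ (subtypeCongrHom (· ∈ s)).range ↔ Set.MapsTo σ s s := by
  constructor
  · rintro ⟨⟨a, b⟩, rfl⟩ x hx
    simp [subtypeCongr.left_apply _ _ hx]
  · intro h
    have hmem := apply_mem_iff_of_mapsTo h
    refine ⟨(σ.subtypePerm hmem, σ.subtypePerm fun x => not_congr (hmem x)), ?_⟩
    ext x
    by_cases hx : x ∈ s
    · simp [subtypeCongr.left_apply _ _ hx]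
    · simp [subtypeCongr.right_apply _ _ hx]

theorem Subgroup.centralizer_range_prod {G A B : Type*} [Group G] [Group A] [Group B]
    (ρ₁ : G →* A) (ρ₂ : G →* B) :
    centralizer (Set.range (ρ₁.prod ρ₂)) =
      (centralizer (Set.range ρ₁)).prod (centralizer (Set.range ρ₂)) := by
  ext ⟨a, b⟩
  simp only [mem_prod, mem_centralizer_iff, Set.forall_mem_range, MonoidHom.prod_apply,
    Prod.mk_mul_mk, Prod.ext_iff, forall_and]

theorem Subgroup.map_centralizer_of_injective {A B : Type*} [Group A] [Group B] (f : A →* B)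
    (hf : Function.Injective f) (S : Set A) :
    (centralizer S).map f = centralizer (f '' S) ⊓ f.range := by
  ext y
  constructor
  · rintro ⟨a, ha, rfl⟩
    refine ⟨?_, a, rfl⟩
    rintro - ⟨x, hx, rfl⟩
    rw [← map_mul, ← map_mul, ha x hx]
  · rintro ⟨hy, a, rfl⟩
    refine ⟨a, fun x hx => hf ?_, rfl⟩
    simpa using hy (f x) ⟨x, hx, rfl⟩

theorem centralizer_preserving_iso_prod_general
    {G X : Type*} [Group G] [Finite X] (ρ : G →* Equiv.Perm X) (X₁ X₂ : Set X)
    (hdisj : Disjoint X₁ X₂) (hunion : X₁ ∪ X₂ = Set.univ)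
    (ρ₁ : G →* Equiv.Perm X₁) (ρ₂ : G →* Equiv.Perm X₂)
    (hρ₁ : ∀ (g : G) (x : X₁), ((ρ₁ g x : X₁) : X) = ρ g (x : X))
    (hρ₂ : ∀ (g : G) (x : X₂), ((ρ₂ g x : X₂) : X) = ρ g (x : X)) :
    Nonempty ((centralizerMapsTo ρ X₁) ≃*
      (Subgroup.centralizer (Set.range ⇑ρ₁)) × (Subgroup.centralizer (Set.range ⇑ρ₂))) := by
  classical
  obtain rfl : X₂ = X₁ᶜ := (IsCompl.compl_eq ⟨hdisj, codisjoint_iff.mpr hunion⟩).symm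
  let glue := subtypeCongrHom (· ∈ X₁)
  have hglue : Function.Injective glue := subtypeCongrHom_injective _
  have hρ : ρ = glue.comp (ρ₁.prod ρ₂) := by
    ext g x
    by_cases hx : x ∈ X₁
    · simp [glue, subtypeCongr.left_apply _ _ hx, hρ₁ g ⟨x, hx⟩]
    · simp [glue, subtypeCongr.right_apply _ _ hx, hρ₂ g ⟨x, hx⟩]
  have hsub : centralizerMapsTo ρ X₁ =
      ((centralizer (Set.range ρ₁)).prod (centralizer (Set.range ρ₂))).map glue := by
    rw [← centralizer_range_prod, map_centralizer_of_injective _ hglue, ← Set.range_comp,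
      ← MonoidHom.coe_comp, ← hρ]
    ext σ
    exact and_congr_right' mem_range_subtypeCongrHom_iff.symm
  exact ⟨(MulEquiv.subgroupCongr hsub).trans <|
    (equivMapOfInjective _ _ hglue).symm.trans (prodEquiv _ _)⟩

/-- Let `G` act on a finite set `X` through `ρ`, and suppose `X` is the
disjoint union of two subsets `X₁`, `X₂`, each stable under every `ρ g`, so that `ρ`
restricts to actions `ρ₁ : G →* Equiv.Perm X₁` and `ρ₂ : G →* Equiv.Perm X₂`.  Then the
subgroup of `Equiv.Perm X` of permutations lying in the centralizer of `ρ` and mapping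
`X₁` into `X₁` is isomorphic as a group to the product of the centralizers of `ρ₁` and
of `ρ₂`. -/
theorem centralizer_preserving_iso_prod
    {G X : Type*} [Group G] [Finite X] (ρ : G →* Equiv.Perm X) (X₁ X₂ : Set X)
    (hdisj : Disjoint X₁ X₂) (hunion : X₁ ∪ X₂ = Set.univ)
    (hstab₁ : ∀ g : G, ∀ x ∈ X₁, ρ g x ∈ X₁)
    (hstab₂ : ∀ g : G, ∀ x ∈ X₂, ρ g x ∈ X₂)
    (ρ₁ : G →* Equiv.Perm X₁) (ρ₂ : G →* Equiv.Perm X₂)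
    (hρ₁ : ∀ (g : G) (x : X₁), ((ρ₁ g x : X₁) : X) = ρ g (x : X))
    (hρ₂ : ∀ (g : G) (x : X₂), ((ρ₂ g x : X₂) : X) = ρ g (x : X)) :
    Nonempty ((centralizerMapsTo ρ X₁) ≃*
      (Subgroup.centralizer (Set.range ⇑ρ₁)) × (Subgroup.centralizer (Set.range ⇑ρ₂))) :=
  centralizer_preserving_iso_prod_general ρ X₁ X₂ hdisj hunion ρ₁ ρ₂ hρ₁ hρ₂
end

section
/- Let G be an abelian group acting on a finite nonempty set X through a homomorphism ρ : G →* Equiv.Perm X, and suppose any two points of X have equal stabilizer subgroups in G; let l be the common cardinality of the G-orbits in X. Then for every natural number m with 0 ≤ m ≤ |X|, there exists a subset S ⊆ X with |S| = m and ρ g '' S = S for all g ∈ G if and only if l divides m. -/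
open Pointwise

theorem Set.ncard_preimage_eq_mul {X Y : Type*} [Finite X] [Finite Y] {f : X → Y} {l : ℕ}
    (hf : ∀ y, (f ⁻¹' {y}).ncard = l) (T : Set Y) : (f ⁻¹' T).ncard = l * T.ncard := by
  induction T, T.toFinite using Set.Finite.induction_on with
  | empty => simp
  | @insert y T hy _ ih =>
    rw [Set.insert_eq, Set.preimage_union, Set.ncard_union_eq, Set.ncard_union_eq, hf, ih,
      Set.ncard_singleton, mul_add, mul_one]
    · simpa using hy
    · exact Set.disjoint_singleton_left.2 hy |>.preimage f

namespace MulAction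

variable {G X : Type*} [Group G] [MulAction G X]

theorem quotient_preimage_image_eq_self {S : Set X} (hS : ∀ g : G, g • S = S) :
    Quotient.mk (orbitRel G X) ⁻¹' (Quotient.mk _ '' S) = S := by
  have := quotient_preimage_image_eq_union_mul (G := G) S
  simp only [Set.image_smul, hS, Set.iUnion_const] at this
  exact this

theorem smul_quotient_preimage (g : G) (T : Set (orbitRel.Quotient G X)) :
    g • (Quotient.mk (orbitRel G X) ⁻¹' T) = Quotient.mk _ ⁻¹' T := by
  ext x
  simp [Set.mem_smul_set_iff_inv_smul_mem]

theorem ncard_quotient_preimage [Finite X] {l : ℕ} (hl : ∀ x : X, Nat.card (orbit G x) = l)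
    (T : Set (orbitRel.Quotient G X)) : (Quotient.mk (orbitRel G X) ⁻¹' T).ncard = l * T.ncard := by
  refine Set.ncard_preimage_eq_mul (fun q => ?_) T
  induction q using Quotient.inductionOn with
  | h x =>
    rw [← hl x, ← Nat.card_coe_set_eq]
    congr
    ext y
    exact Quotient.eq

theorem card_eq_mul_card_quotient [Finite X] {l : ℕ} (hl : ∀ x : X, Nat.card (orbit G x) = l) :
    Nat.card X = l * Nat.card (orbitRel.Quotient G X) := by
  simpa only [Set.preimage_univ, Set.ncard_univ] using ncard_quotient_preimage hl Set.univ

theorem exists_smul_eq_self_ncard_eq_iff_dvd [Finite X] {l : ℕ}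
    (hl : ∀ x : X, Nat.card (orbit G x) = l) {m : ℕ} (hm : m ≤ Nat.card X) :
    (∃ S : Set X, S.ncard = m ∧ ∀ g : G, g • S = S) ↔ l ∣ m := by
  constructor
  · rintro ⟨S, rfl, hS⟩
    rw [← quotient_preimage_image_eq_self hS, ncard_quotient_preimage hl]
    exact dvd_mul_right l _
  · rintro ⟨k, rfl⟩
    rcases l.eq_zero_or_pos with rfl | hl0
    · exact ⟨∅, by simp, by simp⟩
    rw [card_eq_mul_card_quotient hl, ← Set.ncard_univ] at hm
    obtain ⟨T, -, hT⟩ := Set.exists_subset_card_eq (Nat.le_of_mul_le_mul_left hm hl0)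
    exact ⟨_, by rw [ncard_quotient_preimage hl, hT], fun g => smul_quotient_preimage g T⟩

end MulAction

theorem invariant_subset_iff_dvd_general
    {G X : Type*} [CommGroup G] [Fintype X] (ρ : G →* Equiv.Perm X) (l : ℕ)
    (hl : ∀ x : X, Nat.card {y : X // ∃ g : G, ρ g x = y} = l) :
    ∀ m : ℕ, m ≤ Fintype.card X →
      ((∃ S : Set X, S.ncard = m ∧ ∀ g : G, ⇑(ρ g) '' S = S) ↔ l ∣ m) := by
  let := MulAction.compHom X ρ
  intro m hm
  rw [← Nat.card_eq_fintype_card] at hm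
  have := MulAction.exists_smul_eq_self_ncard_eq_iff_dvd hl hm
  simp only [← Set.image_smul] at this
  exact this

/-- Let `G` be an abelian group acting on a finite nonempty set `X`
through `ρ`, with all point stabilizers equal, and let `l` be the common cardinality of
the `G`-orbits.  Then for every `m` with `0 ≤ m ≤ |X|`, there is a subset `S ⊆ X` with
`|S| = m` and `ρ g '' S = S` for all `g` if and only if `l` divides `m`. -/
theorem invariant_subset_iff_dvd
    {G X : Type*} [CommGroup G] [Fintype X] [Nonempty X] (ρ : G →* Equiv.Perm X)
    (hmono : ∀ x y : X, stabOf ρ x = stabOf ρ y) (l : ℕ)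
    (hl : ∀ x : X, Nat.card {y : X // ∃ g : G, ρ g x = y} = l) :
    ∀ m : ℕ, m ≤ Fintype.card X →
      ((∃ S : Set X, S.ncard = m ∧ ∀ g : G, ⇑(ρ g) '' S = S) ↔ l ∣ m) :=
  invariant_subset_iff_dvd_general ρ l hl
end

section
/- Let A be an abelian group and n : ℕ. Two elements (f, σ) and (g, τ) of the wreath product A ≀ Σ_n are conjugate in A ≀ Σ_n if and only if there exists π ∈ Equiv.Perm (Fin n) such that π σ π⁻¹ = τ and for every i : Fin n, the product of f over the σ-orbit of i equals the product of g over the τ-orbit of π i; that is, ∏_{j ∈ {j | σ.SameCycle i j}} f j = ∏_{j ∈ {j | τ.SameCycle (π i) j}} g j. -/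
open Finset Function

namespace Equiv.Perm

variable {α : Type*} [Fintype α] [DecidableEq α]

section CommMonoid

variable {M : Type*} [CommMonoid M]

theorem prod_sameCycle_comp_inv (τ : Perm α) (x : α) (u : α → M) :
    ∏ j ∈ univ.filter (fun j => τ.SameCycle x j), u (τ⁻¹ j) =
      ∏ j ∈ univ.filter (fun j => τ.SameCycle x j), u j :=
  prod_equiv τ⁻¹ (by simp [← inv_def]) (fun _ _ => rfl)

theorem prod_sameCycle_conj (π σ : Perm α) (i : α) (u : α → M) :
    ∏ j ∈ univ.filter (fun j => (π * σ * π⁻¹).SameCycle (π i) j), u j =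
      ∏ j ∈ univ.filter (fun j => σ.SameCycle i j), u (π j) :=
  (prod_equiv π (by simp [sameCycle_conj]) (fun _ _ => rfl)).symm

theorem forall_prod_sameCycle_conj_iff (π σ : Perm α) (f g : α → M) :
    (∀ x, ∏ j ∈ univ.filter (fun j => (π * σ * π⁻¹).SameCycle x j), f (π⁻¹ j) =
      ∏ j ∈ univ.filter (fun j => (π * σ * π⁻¹).SameCycle x j), g j) ↔
    ∀ i, ∏ j ∈ univ.filter (fun j => σ.SameCycle i j), f j =
      ∏ j ∈ univ.filter (fun j => (π * σ * π⁻¹).SameCycle (π i) j), g j := by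
  rw [← π.forall_congr_right]
  simp only [prod_sameCycle_conj, coe_inv, symm_apply_apply]

theorem prod_sameCycle_eq_prod_range (τ : Perm α) (x : α) (u : α → M) :
    ∏ j ∈ univ.filter (fun j => τ.SameCycle x j), u j =
      ∏ l ∈ range (minimalPeriod τ x), u ((τ ^ l) x) := by
  symm
  refine prod_nbij (fun l => (τ ^ l) x)
    (fun l _ => by simp [sameCycle_pow_right, SameCycle.refl]) ?_ ?_ (fun _ _ => rfl)
  · intro a ha b hb hab
    exact iterate_injOn_Iio_minimalPeriod (by simpa using ha) (by simpa using hb) hab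
  · intro j hj
    obtain ⟨l, rfl⟩ := (mem_filter.1 hj).2.exists_nat_pow_eq
    have hpos := minimalPeriod_pos_of_mem_periodicPts (τ.injective.mem_periodicPts x)
    refine ⟨l % minimalPeriod τ x, mem_coe.2 (mem_range.2 (Nat.mod_lt _ hpos)), ?_⟩
    simp only [coe_pow, iterate_mod_minimalPeriod_eq]

theorem prod_range_pow_apply_eq_one {τ : Perm α} {u : α → M}
    (hu : ∀ x, ∏ j ∈ univ.filter (fun j => τ.SameCycle x j), u j = 1) {y : α} {e : ℕ}
    (he : (τ ^ e) y = y) : ∏ l ∈ range e, u ((τ ^ l) y) = 1 := by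
  obtain ⟨m, rfl⟩ : minimalPeriod τ y ∣ e := IsPeriodicPt.minimalPeriod_dvd he
  have hper (k : ℕ) : (τ ^ (minimalPeriod τ y * k)) y = y :=
    (isPeriodicPt_minimalPeriod τ y).mul_const k
  clear he
  induction m with
  | zero => simp
  | succ m ih =>
    rw [mul_add_one, prod_range_add, ih, one_mul]
    simp_rw [add_comm (minimalPeriod τ y * m), pow_add, mul_apply, hper]
    rw [← prod_sameCycle_eq_prod_range, hu]

theorem prod_range_pow_apply_eq_of_pow_apply_eq {τ : Perm α} {u : α → M}
    (hu : ∀ x, ∏ j ∈ univ.filter (fun j => τ.SameCycle x j), u j = 1) {c : α} {d d' : ℕ}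
    (h : (τ ^ d) c = (τ ^ d') c) :
    ∏ l ∈ range d, u ((τ ^ l) c) = ∏ l ∈ range d', u ((τ ^ l) c) := by
  wlog hle : d ≤ d' generalizing d d'
  · exact (this h.symm (le_of_not_ge hle)).symm
  obtain ⟨e, rfl⟩ := Nat.exists_eq_add_of_le hle
  have he : (τ ^ e) ((τ ^ d) c) = (τ ^ d) c := by rw [← mul_apply, ← pow_add, add_comm, ← h]
  simp_rw [prod_range_add, add_comm d, pow_add, mul_apply, prod_range_pow_apply_eq_one hu he,
    mul_one]

end CommMonoid

theorem exists_eq_div_apply_inv {G : Type*} [CommGroup G] {τ : Perm α} {u : α → G}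
    (hu : ∀ x, ∏ j ∈ univ.filter (fun j => τ.SameCycle x j), u j = 1) :
    ∃ h : α → G, ∀ k, u k = h k / h (τ⁻¹ k) := by
  let c (x : α) : α := (Quotient.mk (SameCycle.setoid τ) x).out
  have hc (x : α) : τ.SameCycle (c x) (τ x) :=
    sameCycle_apply_right.2 (Quotient.mk_out (s := SameCycle.setoid τ) x)
  choose d hd using fun x => (hc x).exists_nat_pow_eq
  refine ⟨fun x => ∏ l ∈ range (d x), u ((τ ^ l) (c x)), fun k => ?_⟩
  have hck : c (τ⁻¹ k) = c k :=
    congrArg Quotient.out (Quotient.sound (sameCycle_symm_apply_left.2 (SameCycle.refl τ k)))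
  have hd_inv : (τ ^ d (τ⁻¹ k)) (c k) = k := by rw [← hck, hd]; exact τ.apply_symm_apply k
  have hd_succ : (τ ^ (d (τ⁻¹ k) + 1)) (c k) = τ k := by rw [pow_succ', mul_apply, hd_inv]
  rw [eq_div_iff_mul_eq']
  dsimp only
  rw [hck, prod_range_pow_apply_eq_of_pow_apply_eq hu ((hd k).trans hd_succ.symm), prod_range_succ,
    hd_inv, mul_comm]

theorem exists_eq_mul_div_apply_inv_iff {G : Type*} [CommGroup G] (τ : Perm α)
    (v w : α → G) :
    (∃ h : α → G, ∀ k, w k = h k * v k / h (τ⁻¹ k)) ↔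
      ∀ x, ∏ j ∈ univ.filter (fun j => τ.SameCycle x j), v j =
        ∏ j ∈ univ.filter (fun j => τ.SameCycle x j), w j := by
  constructor
  · rintro ⟨h, hw⟩ x
    simp_rw [hw, prod_div_distrib, prod_mul_distrib, prod_sameCycle_comp_inv, mul_div_cancel_left]
  · intro hvw
    obtain ⟨h, hh⟩ := exists_eq_div_apply_inv (τ := τ) (u := fun k => w k / v k) fun x => by
      rw [prod_div_distrib, hvw, div_self']
    exact ⟨h, fun k => by rw [← div_mul_eq_mul_div, ← hh, div_mul_cancel]⟩

end Equiv.Perm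

theorem WreathProduct.mk_mul_mk_mul_mk_inv {A : Type*} [Group A] {n : ℕ} (h f : Fin n → A)
    (π σ : Equiv.Perm (Fin n)) :
    (⟨h, π⟩ * ⟨f, σ⟩ * ⟨h, π⟩⁻¹ : WreathProduct A n) =
      ⟨fun k => h k * f (π⁻¹ k) / h ((π * σ * π⁻¹)⁻¹ k), π * σ * π⁻¹⟩ := by
  refine SemidirectProduct.ext ?_ rfl
  simp only [SemidirectProduct.mul_left, SemidirectProduct.mul_right, SemidirectProduct.inv_left]
  ext k
  simp [permMulAut, div_eq_mul_inv, mul_assoc, -SemidirectProduct.mk_eq_inl_mul_inr]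
  rfl

/-- Two elements `(f, σ)` and `(g, τ)` of the wreath product `A ≀ Σ_n`
are conjugate if and only if there is `π ∈ Equiv.Perm (Fin n)` with `π σ π⁻¹ = τ` such
that for every `i`, the product of `f` over the `σ`-orbit of `i` equals the product of
`g` over the `τ`-orbit of `π i`. -/
theorem wreath_isConj_iff
    {A : Type*} [CommGroup A] (n : ℕ) (f g : Fin n → A) (σ τ : Equiv.Perm (Fin n)) :
    IsConj (⟨f, σ⟩ : WreathProduct A n) (⟨g, τ⟩ : WreathProduct A n) ↔
      ∃ π : Equiv.Perm (Fin n), π * σ * π⁻¹ = τ ∧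
        ∀ i : Fin n,
          (∏ j ∈ Finset.univ.filter (fun j => σ.SameCycle i j), f j) =
            ∏ j ∈ Finset.univ.filter (fun j => τ.SameCycle (π i) j), g j := by
  rw [isConj_iff]
  constructor
  · rintro ⟨⟨h, π⟩, hc⟩
    rw [WreathProduct.mk_mul_mk_mul_mk_inv] at hc
    obtain ⟨hg, rfl⟩ := SemidirectProduct.ext_iff.1 hc
    refine ⟨π, rfl, (Equiv.Perm.forall_prod_sameCycle_conj_iff π σ f g).1 ?_⟩
    exact (Equiv.Perm.exists_eq_mul_div_apply_inv_iff _ _ g).1 ⟨h, fun k => (congrFun hg k).symm⟩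
  · rintro ⟨π, rfl, hprod⟩
    obtain ⟨h, hh⟩ := (Equiv.Perm.exists_eq_mul_div_apply_inv_iff _ _ g).2
      ((Equiv.Perm.forall_prod_sameCycle_conj_iff π σ f g).2 hprod)
    refine ⟨⟨h, π⟩, ?_⟩
    rw [WreathProduct.mk_mul_mk_mul_mk_inv]
    exact SemidirectProduct.ext (funext fun k => (hh k).symm) rfl
end

section
/- Let p be a prime and let i be a natural number with 1 ≤ i ≤ p − 2. Then p divides the i-th elementary symmetric function of 1, 2, …, p − 1; that is, p divides ∑_{S} ∏_{j ∈ S} j, where S ranges over the i-element subsets of {1, 2, …, p − 1}. (Equivalently, the Stirling numbers of the first kind s(p, i) with 1 < i < p are divisible by p.) -/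
/-!
Multiplication by a generator `g` of `(ZMod p)ˣ` permutes the nonzero residues, hence fixes their
`i`-th elementary symmetric function `e_i`, while it multiplies every `i`-fold product by `g ^ i`.
So `(g ^ i - 1) * e_i = 0` in `ZMod p`, and `g ^ i ≠ 1` for `0 < i < p - 1` as `g` has order `p - 1`.
-/

open Finset

theorem Multiset.esymm_eq_zero_of_map_mul_eq {R : Type*} [CommRing R] [NoZeroDivisors R]
    {s : Multiset R} {c : R} {n : ℕ} (hs : s.map (c * ·) = s) (hc : c ^ n ≠ 1) :
    s.esymm n = 0 := by
  have hfix : c ^ n * s.esymm n = s.esymm n := by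
    simpa only [smul_eq_mul, hs] using pow_smul_esymm c n s
  have : (c ^ n - 1) * s.esymm n = 0 := by rw [sub_mul, one_mul, hfix, sub_self]
  exact (mul_eq_zero.mp this).resolve_left (sub_ne_zero.mpr hc)

theorem esymm_univ_units_eq_zero {R : Type*} [CommRing R] [IsDomain R] [Fintype Rˣ] {n : ℕ}
    (h0 : 0 < n) (hn : n < Fintype.card Rˣ) :
    (univ.val.map ((↑) : Rˣ → R)).esymm n = 0 := by
  obtain ⟨g, hg⟩ := IsCyclic.exists_generator (α := Rˣ)
  have hord : orderOf g = Fintype.card Rˣ := by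
    rw [orderOf_eq_card_of_forall_mem_zpowers hg, Nat.card_eq_fintype_card]
  refine Multiset.esymm_eq_zero_of_map_mul_eq (c := (g : R)) ?_ ?_
  · conv_rhs => rw [← Multiset.map_univ_val_equiv (Equiv.mulLeft g)]
    rw [Multiset.map_map, Multiset.map_map]
    rfl
  · rw [← Units.val_pow_eq_pow_val, Ne, Units.val_eq_one]
    exact pow_ne_one_of_lt_orderOf h0.ne' (hord ▸ hn)

theorem ZMod.map_natCast_Icc_eq_units (p : ℕ) [Fact p.Prime] :
    (Icc 1 (p - 1)).val.map (Nat.cast : ℕ → ZMod p) = univ.val.map ((↑) : (ZMod p)ˣ → ZMod p) := by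
  have hinj : Set.InjOn (Nat.cast : ℕ → ZMod p) (Icc 1 (p - 1)) := by
    intro a ha b hb hab
    simp only [coe_Icc, Set.mem_Icc] at ha hb
    rwa [ZMod.natCast_eq_natCast_iff', Nat.mod_eq_of_lt (by omega),
      Nat.mod_eq_of_lt (by omega)] at hab
  refine (Multiset.Nodup.ext ((Icc 1 (p - 1)).nodup.map_on fun a ha b hb => hinj ha hb)
    (univ.nodup.map Units.val_injective)).mpr fun x => ?_
  simp only [Multiset.mem_map, mem_val, mem_Icc, mem_univ, true_and]
  constructor
  · rintro ⟨a, ⟨ha1, hap⟩, rfl⟩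
    refine ⟨Units.mk0 a ?_, rfl⟩
    rw [Ne, ZMod.natCast_eq_zero_iff]
    exact Nat.not_dvd_of_pos_of_lt ha1 (by omega)
  · rintro ⟨u, rfl⟩
    have := ZMod.val_lt (u : ZMod p)
    exact ⟨(u : ZMod p).val, ⟨ZMod.val_pos.mpr u.ne_zero, by omega⟩, ZMod.natCast_zmod_val _⟩

/-- Let `p` be a prime and `1 ≤ i ≤ p − 2`.  Then `p` divides the
`i`-th elementary symmetric function of `1, 2, …, p − 1`, i.e. `p` divides
`∑_S ∏_{j ∈ S} j` where `S` ranges over the `i`-element subsets of `{1, …, p − 1}`. -/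
theorem prime_dvd_esymm (p i : ℕ) (hp : p.Prime) (h1 : 1 ≤ i) (h2 : i ≤ p - 2) :
    p ∣ ∑ S ∈ Finset.powersetCard i (Finset.Icc 1 (p - 1)), ∏ j ∈ S, j := by
  have := Fact.mk hp
  rw [← ZMod.natCast_eq_zero_iff]
  push_cast
  rw [← esymm_map_val, ZMod.map_natCast_Icc_eq_units]
  exact esymm_univ_units_eq_zero h1 (by rw [ZMod.card_units]; have := hp.two_le; omega)
end

section
/- Let m ≥ 1 and let d : Fin m → ℂ be a function with |d i| = 1 for every i, so that the diagonal matrix Matrix.diagonal d lies in Matrix.unitaryGroup (Fin m) ℂ. Then the centralizer of Matrix.diagonal d in Matrix.unitaryGroup (Fin m) ℂ is isomorphic as a group to the product, over the distinct values z in the range of d, of the unitary groups Matrix.unitaryGroup {i : Fin m // d i = z} ℂ. In other words, the centralizer of a diagonal unitary matrix is a product of unitary groups indexed by its eigenvalues, of sizes given by the eigenvalue multiplicities. -/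
/-!
A matrix commutes with `diagonal d` exactly when its `(i, j)` entry vanishes whenever
`d i ≠ d j`, since `(d i - d j) * M i j = 0`. Grouping the indices by the fibres of `d`, these are
the block-diagonal matrices, so block-diagonal assembly is an injective star-monoid homomorphism
from `∀ z, Matrix (d⁻¹ z) (d⁻¹ z)` onto the commutant of `diagonal d`. An injective star-monoid
homomorphism identifies the unitaries of its source with the unitaries in its range, and the
unitaries of a product are the product of the unitary groups.
-/

open Matrix

namespace Unitary

variable {I : Type*} {A : I → Type*} [∀ i, Monoid (A i)] [∀ i, StarMul (A i)]

theorem mem_pi_iff {u : ∀ i, A i} : u ∈ unitary (∀ i, A i) ↔ ∀ i, u i ∈ unitary (A i) := by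
  simp only [mem_iff, funext_iff, forall_and]
  rfl

def piEquiv : unitary (∀ i, A i) ≃* ∀ i, unitary (A i) where
  toFun u i := ⟨u.1 i, mem_pi_iff.mp u.2 i⟩
  invFun v := ⟨fun i => v i, mem_pi_iff.mpr fun i => (v i).2⟩
  map_mul' _ _ := rfl

theorem mem_range_map_iff {R S : Type*} [Monoid R] [StarMul R] [Monoid S] [StarMul S]
    {f : R →⋆* S} (hf : Function.Injective f) {u : unitary S} :
    u ∈ Set.range (map f) ↔ (u : S) ∈ Set.range f := by
  constructor
  · rintro ⟨v, rfl⟩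
    exact ⟨v, rfl⟩
  · rintro ⟨x, hx⟩
    have hxu : x ∈ unitary R := by
      rw [mem_iff]
      constructor <;> apply hf <;> simp [map_star, hx]
    exact ⟨⟨x, hxu⟩, Subtype.ext hx⟩

end Unitary

def Equiv.sigmaRangeFiberEquiv {ι β : Type*} (d : ι → β) :
    (Σ z : Set.range d, {i // d i = z}) ≃ ι :=
  Equiv.sigmaSubtypeFiberEquiv d (· ∈ Set.range d) Set.mem_range_self

namespace Matrix

variable {ι R : Type*} [Fintype ι] [DecidableEq ι]

theorem commute_diagonal_iff [CommRing R] [NoZeroDivisors R] {d : ι → R} {M : Matrix ι ι R} :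
    Commute (diagonal d) M ↔ ∀ i j, d i ≠ d j → M i j = 0 := by
  simp only [commute_iff_eq, ← Matrix.ext_iff, diagonal_mul, mul_diagonal]
  refine forall₂_congr fun i j => ?_
  rw [← sub_eq_zero, mul_comm (d i), ← mul_sub, mul_eq_zero, sub_eq_zero, or_iff_not_imp_right]

section BlockDiagonalFibers

variable {β : Type*} [DecidableEq β] (R) [CommSemiring R] [StarRing R] (d : ι → β)

def blockDiagonalFibers :
    (∀ z : Set.range d, Matrix {i // d i = z} {i // d i = z} R) →⋆* Matrix ι ι R where
  toMonoidHom := ((reindexAlgEquiv R R (Equiv.sigmaRangeFiberEquiv d)).toRingHom.comp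
    (blockDiagonal'RingHom _ R)).toMonoidHom
  map_star' B := by simp [star_eq_conjTranspose, blockDiagonal'_conjTranspose, Pi.star_def]

theorem blockDiagonalFibers_apply (B : ∀ z : Set.range d, Matrix {i // d i = z} {i // d i = z} R)
    (i j : ι) :
    blockDiagonalFibers R d B i j = blockDiagonal' B
      ((Equiv.sigmaRangeFiberEquiv d).symm i) ((Equiv.sigmaRangeFiberEquiv d).symm j) :=
  rfl

theorem blockDiagonalFibers_injective : Function.Injective (blockDiagonalFibers R d) :=
  (reindex _ _).injective.comp blockDiagonal'_injective

theorem mem_range_blockDiagonalFibers_iff {M : Matrix ι ι R} :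
    M ∈ Set.range (blockDiagonalFibers R d) ↔ ∀ i j, d i ≠ d j → M i j = 0 := by
  constructor
  · rintro ⟨B, rfl⟩ i j hij
    rw [blockDiagonalFibers_apply]
    exact blockDiagonal'_apply_ne B _ _ fun h => hij (congrArg Subtype.val h)
  · intro hM
    refine ⟨fun z => M.toSquareBlock d z, ?_⟩
    ext i j
    by_cases hij : d i = d j
    · have hj : (Equiv.sigmaRangeFiberEquiv d).symm j = ⟨⟨d i, i, rfl⟩, j, hij.symm⟩ :=
        Sigma.subtype_ext (Subtype.ext hij.symm) rfl
      rw [blockDiagonalFibers_apply, hj]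
      exact blockDiagonal'_apply_eq _ _ _ _
    · rw [blockDiagonalFibers_apply, hM i j hij]
      exact blockDiagonal'_apply_ne _ _ _ fun h => hij (congrArg Subtype.val h)

end BlockDiagonalFibers

theorem centralizer_diagonal_eq_range_map [CommRing R] [StarRing R] [NoZeroDivisors R]
    [DecidableEq R] {d : ι → R} (hd : diagonal d ∈ unitaryGroup ι R) :
    Subgroup.centralizer {(⟨diagonal d, hd⟩ : unitaryGroup ι R)} =
      (Unitary.map (blockDiagonalFibers R d)).toMonoidHom.range := by
  ext u
  rw [Subgroup.mem_centralizer_singleton_iff, Subtype.ext_iff, eq_comm]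
  change Commute (diagonal d) (u : Matrix ι ι R) ↔ u ∈ Set.range (Unitary.map _)
  rw [commute_diagonal_iff, ← mem_range_blockDiagonalFibers_iff,
    Unitary.mem_range_map_iff (blockDiagonalFibers_injective R d)]

end Matrix

theorem centralizer_diagonal_unitary_iso_prod_general
    (m : ℕ) (d : Fin m → ℂ)
    (hd : Matrix.diagonal d ∈ Matrix.unitaryGroup (Fin m) ℂ) :
    Nonempty ((Subgroup.centralizer
        {(⟨Matrix.diagonal d, hd⟩ : Matrix.unitaryGroup (Fin m) ℂ)}) ≃*
      ∀ z : Set.range d, Matrix.unitaryGroup {i : Fin m // d i = (z : ℂ)} ℂ) :=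
  ⟨(MulEquiv.subgroupCongr (centralizer_diagonal_eq_range_map hd)).trans <|
    (MonoidHom.ofInjective (Unitary.map_injective (blockDiagonalFibers_injective ℂ d))).symm.trans
      Unitary.piEquiv⟩

/-- The centralizer in the unitary group of a diagonal unitary matrix
`Matrix.diagonal d` is isomorphic as a group to the product, over the distinct values
`z` in the range of `d`, of the unitary groups of the eigenspaces `{i | d i = z}`. -/
theorem centralizer_diagonal_unitary_iso_prod
    (m : ℕ) (hm : 1 ≤ m) (d : Fin m → ℂ) (h1 : ∀ i : Fin m, ‖d i‖ = 1)
    (hd : Matrix.diagonal d ∈ Matrix.unitaryGroup (Fin m) ℂ) :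
    Nonempty ((Subgroup.centralizer
        {(⟨Matrix.diagonal d, hd⟩ : Matrix.unitaryGroup (Fin m) ℂ)}) ≃*
      ∀ z : Set.range d, Matrix.unitaryGroup {i : Fin m // d i = (z : ℂ)} ℂ) :=
  centralizer_diagonal_unitary_iso_prod_general m d hd
end
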